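/- arXiv:1911.13135 — 3 statements merged into one kernel-verified Lean document; each statement's English description precedes it below -/
import Mathlib

section
/- Let Ω be a measurable subset of ℝ^N (e.g. a ball or all of ℝ^N) and let d be a symmetric nonnegative function on pairs of probability measures on Ω such that for every probability measure ν, every pair of probability measures μ₀, μ₁, and every t ∈ [0,1], writing μ_t = (1−t)·μ₀ + t·μ₁ (mixture of measures), one has d(ν, μ_t)² = (1−t)·d(ν, μ₀)² + t·d(ν, μ₁)² − t(1−t)·d(μ₀, μ₁)². Then for any points x₁, …, x_K ∈ Ω and y₁, …, y_J ∈ Ω, d( (1/K)·Σ_{k=1}^K δ_{x_k}, (1/J)·Σ_{j=1}^J δ_{y_j} )² = (1/(K·J))·Σ_{k=1}^K Σ_{j=1}^J d(δ_{x_k}, δ_{y_j})² − (1/(2K²))·Σ_{k=1}^K Σ_{k'=1}^K d(δ_{x_k}, δ_{x_{k'}})² − (1/(2J²))·Σ_{j=1}^J Σ_{j'=1}^J d(δ_{y_j}, δ_{y_{j'}})². -/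
/-!
Writing the uniform average of `μ₀, …, μₙ` as the mixture `(1 - t) • avg(μ₀, …, μₙ₋₁) + t • μₙ`
with `t = 1 / (n + 1)`, the nonlocal calculability identity and induction on `n` give
`d(ν, avg μ)² = avg_i d(ν, μᵢ)² - ½ avg_{i,j} d(μᵢ, μⱼ)²`.
Applying this once to the empirical measure of the `y`'s, and then (by symmetry) to that of the
`x`'s, yields the formula.
-/

open MeasureTheory
open scoped ENNReal

lemma inv_natCast_smul_sum_castSucc {M : Type*} [AddCommMonoid M] [Module ℝ≥0∞ M]
    {n : ℕ} (hn : 0 < n) (m : Fin (n + 1) → M) :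
    ((n + 1 : ℕ) : ℝ≥0∞)⁻¹ • ∑ i, m i
      = ENNReal.ofReal (1 - ((n : ℝ) + 1)⁻¹) • ((n : ℝ≥0∞)⁻¹ • ∑ i : Fin n, m i.castSucc)
        + ENNReal.ofReal ((n : ℝ) + 1)⁻¹ • m (Fin.last n) := by
  have hweight : ENNReal.ofReal ((n : ℝ) + 1)⁻¹ = ((n + 1 : ℕ) : ℝ≥0∞)⁻¹ := by
    rw [ENNReal.ofReal_inv_of_pos (by positivity), ← ENNReal.ofReal_natCast]
    push_cast
    rfl
  have hcoweight : ENNReal.ofReal (1 - ((n : ℝ) + 1)⁻¹) = n * ((n + 1 : ℕ) : ℝ≥0∞)⁻¹ := by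
    rw [show 1 - ((n : ℝ) + 1)⁻¹ = n * ((n : ℝ) + 1)⁻¹ by field_simp; ring,
      ENNReal.ofReal_mul (by positivity), ENNReal.ofReal_natCast, hweight]
  have hcancel : (n : ℝ≥0∞) * ((n + 1 : ℕ) : ℝ≥0∞)⁻¹ * (n : ℝ≥0∞)⁻¹ = ((n + 1 : ℕ) : ℝ≥0∞)⁻¹ := by
    rw [mul_comm (n : ℝ≥0∞), mul_assoc,
      ENNReal.mul_inv_cancel (by exact_mod_cast hn.ne') (ENNReal.natCast_ne_top n), mul_one]
  rw [hweight, hcoweight, smul_smul, hcancel, ← smul_add, Fin.sum_univ_castSucc]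

variable {α : Type*} [MeasurableSpace α]

lemma isProbabilityMeasure_inv_natCast_smul_sum {n : ℕ} (hn : 0 < n) {μ : Fin n → Measure α}
    (hμ : ∀ i, IsProbabilityMeasure (μ i)) :
    IsProbabilityMeasure ((n : ℝ≥0∞)⁻¹ • ∑ i, μ i) := by
  constructor
  simp only [Measure.smul_apply, Measure.coe_finsetSum, Finset.sum_apply, measure_univ,
    Finset.sum_const, Finset.card_univ, Fintype.card_fin, nsmul_eq_mul, mul_one, smul_eq_mul]
  exact ENNReal.inv_mul_cancel (by exact_mod_cast hn.ne') (ENNReal.natCast_ne_top n)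

def IsNonlocallyCalculable (d : Measure α → Measure α → ℝ) : Prop :=
  ∀ ν μ₀ μ₁ : Measure α, IsProbabilityMeasure ν → IsProbabilityMeasure μ₀ →
    IsProbabilityMeasure μ₁ → ∀ t ∈ Set.Icc (0 : ℝ) 1,
      d ν (ENNReal.ofReal (1 - t) • μ₀ + ENNReal.ofReal t • μ₁) ^ 2
        = (1 - t) * d ν μ₀ ^ 2 + t * d ν μ₁ ^ 2 - t * (1 - t) * d μ₀ μ₁ ^ 2

namespace IsNonlocallyCalculable

variable {d : Measure α → Measure α → ℝ}

lemma sq_self_eq_zero (hd : IsNonlocallyCalculable d) {μ : Measure α}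
    (hμ : IsProbabilityMeasure μ) : d μ μ ^ 2 = 0 := by
  have h := hd μ μ μ hμ hμ hμ (1 / 2) (by norm_num)
  rw [← add_smul, ← ENNReal.ofReal_add (by norm_num) (by norm_num)] at h
  norm_num at h
  linarith

lemma sq_apply_inv_natCast_smul_sum (hd : IsNonlocallyCalculable d)
    (hsymm : ∀ μ ν : Measure α, d μ ν = d ν μ) {n : ℕ} (hn : 0 < n) {μ : Fin n → Measure α}
    (hμ : ∀ i, IsProbabilityMeasure (μ i)) (ν : Measure α) [IsProbabilityMeasure ν] :
    d ν ((n : ℝ≥0∞)⁻¹ • ∑ i, μ i) ^ 2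
      = 1 / (n : ℝ) * ∑ i, d ν (μ i) ^ 2 - 1 / (2 * (n : ℝ) ^ 2) * ∑ i, ∑ j, d (μ i) (μ j) ^ 2 := by
  induction n, hn using Nat.le_induction generalizing ν with
  | base =>
    simp [hd.sq_self_eq_zero (hμ 0)]
  | succ n hn ih =>
    have ht : ((n : ℝ) + 1)⁻¹ ∈ Set.Icc (0 : ℝ) 1 :=
      ⟨by positivity, inv_le_one_of_one_le₀ (by simp)⟩
    have hμ' : ∀ i : Fin n, IsProbabilityMeasure (μ i.castSucc) := fun i ↦ hμ _
    have hprefix := isProbabilityMeasure_inv_natCast_smul_sum hn hμ'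
    have hlast := hμ (Fin.last n)
    have hsplit : ∑ i, ∑ j, d (μ i) (μ j) ^ 2
        = ∑ i : Fin n, ∑ j : Fin n, d (μ i.castSucc) (μ j.castSucc) ^ 2
          + 2 * ∑ i : Fin n, d (μ (Fin.last n)) (μ i.castSucc) ^ 2 := by
      simp only [Fin.sum_univ_castSucc, Finset.sum_add_distrib, hd.sq_self_eq_zero hlast,
        hsymm (μ _) (μ (Fin.last n))]
      ring
    rw [inv_natCast_smul_sum_castSucc hn, hd _ _ _ ‹_› hprefix hlast _ ht, ih hμ',
      hsymm (_ • _) (μ (Fin.last n)), ih hμ', hsplit,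
      Fin.sum_univ_castSucc (fun i ↦ d ν (μ i) ^ 2)]
    push_cast
    field_simp
    ring

end IsNonlocallyCalculable

theorem stmt2_general {N : ℕ} (Ω : Set (EuclideanSpace ℝ (Fin N)))
    (d : Measure Ω → Measure Ω → ℝ)
    (hsymm : ∀ μ ν : Measure Ω, d μ ν = d ν μ)
    (hid : ∀ ν μ₀ μ₁ : Measure Ω, IsProbabilityMeasure ν → IsProbabilityMeasure μ₀ →
      IsProbabilityMeasure μ₁ → ∀ t ∈ Set.Icc (0 : ℝ) 1,
        d ν (ENNReal.ofReal (1 - t) • μ₀ + ENNReal.ofReal t • μ₁) ^ 2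
          = (1 - t) * d ν μ₀ ^ 2 + t * d ν μ₁ ^ 2 - t * (1 - t) * d μ₀ μ₁ ^ 2)
    (K J : ℕ) (hK : 0 < K) (hJ : 0 < J)
    (x : Fin K → Ω) (y : Fin J → Ω) :
    d ((K : ℝ≥0∞)⁻¹ • ∑ k, Measure.dirac (x k))
        ((J : ℝ≥0∞)⁻¹ • ∑ j, Measure.dirac (y j)) ^ 2
      = (1 / (K * J : ℝ)) * ∑ k, ∑ j, d (Measure.dirac (x k)) (Measure.dirac (y j)) ^ 2
        - (1 / (2 * (K : ℝ) ^ 2)) * ∑ k, ∑ k', d (Measure.dirac (x k)) (Measure.dirac (x k')) ^ 2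
        - (1 / (2 * (J : ℝ) ^ 2)) * ∑ j, ∑ j', d (Measure.dirac (y j)) (Measure.dirac (y j')) ^ 2 := by
  have hd : IsNonlocallyCalculable d := hid
  have hX := isProbabilityMeasure_inv_natCast_smul_sum hK (μ := fun k ↦ Measure.dirac (x k))
    fun _ ↦ inferInstance
  have hcross (j : Fin J) : d ((K : ℝ≥0∞)⁻¹ • ∑ k, Measure.dirac (x k)) (Measure.dirac (y j)) ^ 2
      = 1 / (K : ℝ) * ∑ k, d (Measure.dirac (x k)) (Measure.dirac (y j)) ^ 2
        - 1 / (2 * (K : ℝ) ^ 2) * ∑ k, ∑ k', d (Measure.dirac (x k)) (Measure.dirac (x k')) ^ 2 := by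
    rw [hsymm, hd.sq_apply_inv_natCast_smul_sum hsymm hK fun _ ↦ inferInstance]
    simp only [hsymm (Measure.dirac (y j))]
  rw [hd.sq_apply_inv_natCast_smul_sum hsymm hJ fun _ ↦ inferInstance]
  simp only [hcross, Finset.sum_sub_distrib, ← Finset.mul_sum, Finset.sum_const, Finset.card_univ,
    Fintype.card_fin, nsmul_eq_mul]
  rw [Finset.sum_comm]
  field_simp

/-- If a symmetric nonnegative function `d` on probability measures on a measurable set
`Ω ⊆ ℝ^N` satisfies the "nonlocal calculability" identity
`d(ν, (1−t)μ₀ + tμ₁)² = (1−t)d(ν,μ₀)² + t d(ν,μ₁)² − t(1−t)d(μ₀,μ₁)²`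
along all straight-line segments of probability measures, then the distance between two
empirical (uniform sum-of-Diracs) measures is given by the explicit double-sum formula. -/
theorem stmt2 {N : ℕ} (Ω : Set (EuclideanSpace ℝ (Fin N))) (hΩ : MeasurableSet Ω)
    (d : Measure Ω → Measure Ω → ℝ)
    (hsymm : ∀ μ ν : Measure Ω, d μ ν = d ν μ)
    (hnonneg : ∀ μ ν : Measure Ω, 0 ≤ d μ ν)
    (hid : ∀ ν μ₀ μ₁ : Measure Ω, IsProbabilityMeasure ν → IsProbabilityMeasure μ₀ →
      IsProbabilityMeasure μ₁ → ∀ t ∈ Set.Icc (0 : ℝ) 1,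
        d ν (ENNReal.ofReal (1 - t) • μ₀ + ENNReal.ofReal t • μ₁) ^ 2
          = (1 - t) * d ν μ₀ ^ 2 + t * d ν μ₁ ^ 2 - t * (1 - t) * d μ₀ μ₁ ^ 2)
    (K J : ℕ) (hK : 0 < K) (hJ : 0 < J)
    (x : Fin K → Ω) (y : Fin J → Ω) :
    d ((K : ℝ≥0∞)⁻¹ • ∑ k, Measure.dirac (x k))
        ((J : ℝ≥0∞)⁻¹ • ∑ j, Measure.dirac (y j)) ^ 2
      = (1 / (K * J : ℝ)) * ∑ k, ∑ j, d (Measure.dirac (x k)) (Measure.dirac (y j)) ^ 2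
        - (1 / (2 * (K : ℝ) ^ 2)) * ∑ k, ∑ k', d (Measure.dirac (x k)) (Measure.dirac (x k')) ^ 2
        - (1 / (2 * (J : ℝ) ^ 2)) * ∑ j, ∑ j', d (Measure.dirac (y j)) (Measure.dirac (y j')) ^ 2 :=
  stmt2_general Ω d hsymm hid K J hK hJ x y
end

section
/- Let μ and ν be probability measures on ℝ^N each with finite first moment (∫‖x‖ dμ(x) < ∞ and ∫‖y‖ dν(y) < ∞). Then ∫∫ ‖x − y‖ dμ(x) dν(y) − (1/2) ∫∫ ‖x − x'‖ dμ(x) dμ(x') − (1/2) ∫∫ ‖y − y'‖ dν(y) dν(y') ≥ 0. -/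
/-! For real samples, `|x - y|` is the length of `(min x y, max x y]`, so by Tonelli, with
`F t = μ (Iio t)` and `G t = ν (Iio t)`, the quantity `2 E|X - Y| - E|X - X'| - E|Y - Y'|`
equals `2 ∫ (F t - G t)² dt ≥ 0`. In a finite-dimensional inner product space, averaging
`|⟪g, x - y⟫|` over `g` in the unit ball gives `c ‖x - y‖` with `0 < c < ∞` (the average only
depends on `‖x - y‖`, by invariance under reflections), so the inequality is the average over `g`
of the one-dimensional inequality for the pushforwards under `⟪g, ·⟫`. -/

open MeasureTheory Set Metric ENNReal
open scoped RealInnerProductSpace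

section PseudoEMetric

variable {α : Type*} [PseudoEMetricSpace α] [MeasurableSpace α]

noncomputable def meanEdist (μ ν : Measure α) : ℝ≥0∞ := ∫⁻ x, ∫⁻ y, edist x y ∂ν ∂μ

variable [OpensMeasurableSpace α] [SecondCountableTopology α]

lemma meanEdist_eq_lintegral_prod (μ ν : Measure α) [SFinite ν] :
    meanEdist μ ν = ∫⁻ p, edist p.1 p.2 ∂μ.prod ν :=
  (lintegral_prod _ measurable_edist.aemeasurable).symm

lemma meanEdist_map {β : Type*} [MeasurableSpace β] (μ ν : Measure β) [SFinite ν]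
    {f : β → α} (hf : Measurable f) :
    meanEdist (μ.map f) (ν.map f) = ∫⁻ x, ∫⁻ y, edist (f x) (f y) ∂ν ∂μ := by
  rw [meanEdist, lintegral_map (measurable_edist.lintegral_prod_right') hf]
  exact lintegral_congr fun x => lintegral_map (measurable_const.edist measurable_id) hf

end PseudoEMetric

lemma Real.edist_eq_volume_setOf_mem_prod (x y : ℝ) :
    edist x y = volume {t | (x, y) ∈ Iio t ×ˢ Ici t ∪ Ici t ×ˢ Iio t} := by
  have : {t | (x, y) ∈ Iio t ×ˢ Ici t ∪ Ici t ×ˢ Iio t} = uIoc x y := by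
    ext t; simp only [mem_uIoc, mem_ofPred_eq, mem_union, mem_prod, mem_Iio, mem_Ici]; tauto
  rw [this, Real.volume_uIoc, edist_dist, Real.dist_eq, abs_sub_comm]

lemma Real.meanEdist_eq_lintegral (μ ν : Measure ℝ) [SFinite μ] [SFinite ν] :
    meanEdist μ ν = ∫⁻ t, μ (Iio t) * ν (Ici t) + μ (Ici t) * ν (Iio t) := by
  set T : Set ((ℝ × ℝ) × ℝ) := {q | q.1 ∈ Iio q.2 ×ˢ Ici q.2 ∪ Ici q.2 ×ˢ Iio q.2}
  have hT : MeasurableSet T := by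
    simp only [T, mem_union, mem_prod, mem_Iio, mem_Ici]
    measurability
  calc meanEdist μ ν = (μ.prod ν).prod volume T := by
        rw [meanEdist_eq_lintegral_prod, Measure.prod_apply hT]
        exact lintegral_congr fun p => Real.edist_eq_volume_setOf_mem_prod p.1 p.2
    _ = ∫⁻ t, μ.prod ν (Iio t ×ˢ Ici t ∪ Ici t ×ˢ Iio t) := Measure.prod_apply_symm hT
    _ = _ := by
        refine lintegral_congr fun t => ?_
        rw [measure_union _ (measurableSet_Ici.prod measurableSet_Iio), Measure.prod_prod,
          Measure.prod_prod]
        exact disjoint_left.2 fun p h h' => (not_lt.2 (mem_Ici.1 h'.1)) h.1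

lemma ENNReal.mul_add_mul_le_of_add_eq_one {a a' b b' : ℝ≥0∞} (ha : a + a' = 1)
    (hb : b + b' = 1) : a * a' + b * b' ≤ a * b' + a' * b := by
  lift a to NNReal using ne_top_of_le_ne_top one_ne_top (ha ▸ le_self_add)
  lift a' to NNReal using ne_top_of_le_ne_top one_ne_top (ha ▸ le_add_self)
  lift b to NNReal using ne_top_of_le_ne_top one_ne_top (hb ▸ le_self_add)
  lift b' to NNReal using ne_top_of_le_ne_top one_ne_top (hb ▸ le_add_self)
  have ha : (a : ℝ) + a' = 1 := by exact_mod_cast ha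
  have hb : (b : ℝ) + b' = 1 := by exact_mod_cast hb
  norm_cast
  rw [← NNReal.coe_le_coe]
  push_cast
  nlinarith [sq_nonneg ((a : ℝ) - b)]

theorem Real.meanEdist_self_add_meanEdist_self_le (μ ν : Measure ℝ) [IsProbabilityMeasure μ]
    [IsProbabilityMeasure ν] : meanEdist μ μ + meanEdist ν ν ≤ 2 * meanEdist μ ν := by
  simp only [Real.meanEdist_eq_lintegral]
  rw [← lintegral_const_mul' _ _ ofNat_ne_top]
  refine (le_lintegral_add _ _).trans (lintegral_mono fun t => ?_)
  have hμ : μ (Iio t) + μ (Ici t) = 1 :=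
    compl_Iio (a := t) ▸ prob_add_prob_compl measurableSet_Iio
  have hν : ν (Iio t) + ν (Ici t) = 1 :=
    compl_Iio (a := t) ▸ prob_add_prob_compl measurableSet_Iio
  calc _ = 2 * (μ (Iio t) * μ (Ici t) + ν (Iio t) * ν (Ici t)) := by ring
    _ ≤ _ := by grw [ENNReal.mul_add_mul_le_of_add_eq_one hμ hν]

section InnerProductSpace

variable {E : Type*} [NormedAddCommGroup E] [InnerProductSpace ℝ E] [FiniteDimensional ℝ E]
  [MeasurableSpace E] [BorelSpace E]

noncomputable def meanAbsInner (a : E) : ℝ≥0∞ := ∫⁻ g in ball (0 : E) 1, ‖⟪g, a⟫‖ₑ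

lemma meanAbsInner_linearIsometryEquiv (R : E ≃ₗᵢ[ℝ] E) (a : E) :
    meanAbsInner (R a) = meanAbsInner a := by
  have hR := R.measurePreserving.setLIntegral_comp_preimage_emb
    R.toHomeomorph.measurableEmbedding (fun g => ‖⟪g, R a⟫‖ₑ) (ball 0 1)
  simp only [LinearIsometryEquiv.inner_map_map] at hR
  rw [meanAbsInner, meanAbsInner, ← hR, R.preimage_ball, map_zero]

lemma meanAbsInner_smul (r : ℝ) (a : E) : meanAbsInner (r • a) = ‖r‖ₑ * meanAbsInner a := by
  simp only [meanAbsInner, real_inner_smul_right, enorm_mul]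
  exact lintegral_const_mul' _ _ enorm_ne_top

lemma meanAbsInner_congr_norm {a b : E} (h : ‖a‖ = ‖b‖) : meanAbsInner a = meanAbsInner b := by
  rw [← Submodule.reflection_sub h, meanAbsInner_linearIsometryEquiv]

lemma meanAbsInner_eq_enorm_mul {u : E} (hu : ‖u‖ = 1) (a : E) :
    meanAbsInner a = ‖a‖ₑ * meanAbsInner u := by
  rw [← enorm_norm a, ← meanAbsInner_smul]
  exact meanAbsInner_congr_norm (by rw [norm_smul, hu, mul_one, norm_norm])

lemma meanAbsInner_lt_top (a : E) : meanAbsInner a < ⊤ := by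
  calc meanAbsInner a ≤ ∫⁻ _ in ball (0 : E) 1, ‖a‖ₑ := by
        refine setLIntegral_mono measurable_const fun g hg => ?_
        grw [enorm_le_iff_norm_le, norm_inner_le_norm, mem_ball_zero_iff.1 hg, one_mul]
    _ < ⊤ := by
        rw [setLIntegral_const]
        exact mul_lt_top enorm_lt_top measure_ball_lt_top

lemma meanAbsInner_pos {a : E} (ha : a ≠ 0) : 0 < meanAbsInner a := by
  have hK : volume ((ℝ ∙ a)ᗮ : Set E) = 0 := by
    refine Measure.addHaar_submodule _ _ fun h => ha ?_
    rwa [Submodule.orthogonal_eq_top_iff, Submodule.span_singleton_eq_bot] at h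
  have hsupp : Function.support (fun g : E => ‖⟪g, a⟫‖ₑ) = ((ℝ ∙ a)ᗮ : Set E)ᶜ := by
    ext g; simp [Submodule.mem_orthogonal_singleton_iff_inner_left]
  rw [meanAbsInner, lintegral_pos_iff_support (by fun_prop), hsupp,
    Measure.restrict_apply' measurableSet_ball, inter_comm, ← sdiff_eq, measure_sdiff_null hK]
  exact measure_ball_pos _ _ one_pos

lemma lintegral_ball_meanEdist_map_inner {u : E} (hu : ‖u‖ = 1) (μ ν : Measure E) [SFinite μ]
    [SFinite ν] :
    ∫⁻ g in ball (0 : E) 1, meanEdist (μ.map (⟪g, ·⟫)) (ν.map (⟪g, ·⟫))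
      = meanEdist μ ν * meanAbsInner u := by
  calc ∫⁻ g in ball (0 : E) 1, meanEdist (μ.map (⟪g, ·⟫)) (ν.map (⟪g, ·⟫))
      = ∫⁻ g in ball (0 : E) 1, ∫⁻ x, ∫⁻ y, ‖⟪g, x - y⟫‖ₑ ∂ν ∂μ := by
        refine lintegral_congr fun g => ?_
        rw [meanEdist_map μ ν (by fun_prop : Measurable (⟪g, ·⟫))]
        simp only [edist_eq_enorm_sub, ← inner_sub_right]
    _ = ∫⁻ x, ∫⁻ y, meanAbsInner (x - y) ∂ν ∂μ := by
        rw [lintegral_lintegral_swap]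
        · exact lintegral_congr fun x => lintegral_lintegral_swap (by fun_prop)
        · exact (Measurable.lintegral_prod_right'
            (f := fun q : (E × E) × E => ‖⟪q.1.1, q.1.2 - q.2⟫‖ₑ) (by fun_prop)).aemeasurable
    _ = meanEdist μ ν * meanAbsInner u := by
        rw [meanEdist, ← lintegral_mul_const' _ _ (meanAbsInner_lt_top u).ne]
        refine lintegral_congr fun x => ?_
        rw [← lintegral_mul_const' _ _ (meanAbsInner_lt_top u).ne]
        exact lintegral_congr fun y => by rw [meanAbsInner_eq_enorm_mul hu, edist_eq_enorm_sub]

theorem meanEdist_self_add_meanEdist_self_le (μ ν : Measure E) [IsProbabilityMeasure μ]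
    [IsProbabilityMeasure ν] : meanEdist μ μ + meanEdist ν ν ≤ 2 * meanEdist μ ν := by
  rcases subsingleton_or_nontrivial E with _ | _
  · simp [meanEdist, Subsingleton.elim _ (0 : E)]
  obtain ⟨u, hu⟩ := exists_norm_eq E zero_le_one
  have hproj (g : E) := by
    have hg : Measurable (⟪g, ·⟫) := by fun_prop
    have := Measure.isProbabilityMeasure_map (μ := μ) hg.aemeasurable
    have := Measure.isProbabilityMeasure_map (μ := ν) hg.aemeasurable
    exact Real.meanEdist_self_add_meanEdist_self_le (μ.map (⟪g, ·⟫)) (ν.map (⟪g, ·⟫))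
  have hu₀ : u ≠ 0 := norm_ne_zero_iff.1 (hu ▸ one_ne_zero)
  refine (ENNReal.mul_le_mul_iff_left (meanAbsInner_pos hu₀).ne'
    (meanAbsInner_lt_top u).ne).1 ?_
  calc (meanEdist μ μ + meanEdist ν ν) * meanAbsInner u
      = (∫⁻ g in ball (0 : E) 1, meanEdist (μ.map (⟪g, ·⟫)) (μ.map (⟪g, ·⟫)))
        + ∫⁻ g in ball (0 : E) 1, meanEdist (ν.map (⟪g, ·⟫)) (ν.map (⟪g, ·⟫)) := by
        rw [add_mul, lintegral_ball_meanEdist_map_inner hu, lintegral_ball_meanEdist_map_inner hu]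
    _ ≤ ∫⁻ g in ball (0 : E) 1, 2 * meanEdist (μ.map (⟪g, ·⟫)) (ν.map (⟪g, ·⟫)) :=
        (le_lintegral_add _ _).trans (lintegral_mono hproj)
    _ = 2 * meanEdist μ ν * meanAbsInner u := by
        rw [lintegral_const_mul' _ _ ofNat_ne_top, lintegral_ball_meanEdist_map_inner hu,
          mul_assoc]

end InnerProductSpace

section FirstMoment

variable {E : Type*} [NormedAddCommGroup E] [MeasurableSpace E] [BorelSpace E]
  [SecondCountableTopology E] {μ ν : Measure E} [IsFiniteMeasure μ] [IsFiniteMeasure ν]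

lemma integrable_prod_sub_of_integrable_norm (hμ : Integrable (‖·‖) μ) (hν : Integrable (‖·‖) ν) :
    Integrable (fun p : E × E => p.1 - p.2) (μ.prod ν) :=
  (((integrable_norm_iff aestronglyMeasurable_id).1 hμ).comp_fst ν).sub
    (((integrable_norm_iff aestronglyMeasurable_id).1 hν).comp_snd μ)

lemma meanEdist_lt_top (hμ : Integrable (‖·‖) μ) (hν : Integrable (‖·‖) ν) :
    meanEdist μ ν < ⊤ := by
  simpa only [meanEdist_eq_lintegral_prod, edist_eq_enorm_sub, HasFiniteIntegral] using
    (integrable_prod_sub_of_integrable_norm hμ hν).hasFiniteIntegral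

lemma integral_integral_norm_sub (hμ : Integrable (‖·‖) μ) (hν : Integrable (‖·‖) ν) :
    ∫ x, ∫ y, ‖x - y‖ ∂ν ∂μ = (meanEdist μ ν).toReal := by
  have h := integrable_prod_sub_of_integrable_norm hμ hν
  rw [integral_integral h.norm, integral_norm_eq_lintegral_enorm h.aestronglyMeasurable,
    meanEdist_eq_lintegral_prod]
  simp only [edist_eq_enorm_sub]

end FirstMoment

/-- Nonnegativity of the (squared) energy distance: for probability measures `μ, ν` on `ℝ^N`
with finite first moments,
`∫∫‖x−y‖ dμ dν − (1/2)∫∫‖x−x'‖ dμ dμ − (1/2)∫∫‖y−y'‖ dν dν ≥ 0`. -/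
theorem stmt4 {N : ℕ} (μ ν : Measure (EuclideanSpace ℝ (Fin N)))
    [IsProbabilityMeasure μ] [IsProbabilityMeasure ν]
    (hμ : Integrable (fun x => ‖x‖) μ) (hν : Integrable (fun y => ‖y‖) ν) :
    0 ≤ (∫ x, ∫ y, ‖x - y‖ ∂ν ∂μ)
        - (1 / 2) * (∫ x, ∫ x', ‖x - x'‖ ∂μ ∂μ)
        - (1 / 2) * (∫ y, ∫ y', ‖y - y'‖ ∂ν ∂ν) := by
  have h := ENNReal.toReal_mono (mul_ne_top ofNat_ne_top (meanEdist_lt_top hμ hν).ne)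
    (meanEdist_self_add_meanEdist_self_le μ ν)
  rw [toReal_add (meanEdist_lt_top hμ hμ).ne (meanEdist_lt_top hν hν).ne, toReal_mul,
    toReal_ofNat] at h
  rw [integral_integral_norm_sub hμ hν, integral_integral_norm_sub hμ hμ,
    integral_integral_norm_sub hν hν]
  linarith
end

section
/- For every real s > 1/2, the function a ↦ ∫_ℝ (2 − 2·cos(a·ξ)) · (1 + ξ²)^{−s} dξ tends to 2·√π · Γ(s − 1/2) / Γ(s) as a → +∞. -/
open MeasureTheory Filter

/-! Riemann–Lebesgue kills the oscillating part, so the integral tends to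
`2 ∫ (1 + ξ²)^(-s) dξ`. The substitution `t = (1 + ξ²)⁻¹` turns `∫ (1 + ξ²)^(-s) dξ` into the
Beta integral `B(s - 1/2, 1/2) = Γ(s - 1/2) Γ(1/2) / Γ(s)`, and `Γ(1/2) = √π`. -/

section

open Set Real Topology FourierTransform

theorem integral_Ioo_rpow_mul_one_sub_rpow {u v : ℝ} (hu : 0 < u) (hv : 0 < v) :
    ∫ t in Ioo (0 : ℝ) 1, t ^ (u - 1) * (1 - t) ^ (v - 1) =
      Gamma u * Gamma v / Gamma (u + v) := by
  have hB := Complex.betaIntegral_eq_Gamma_mul_div (u : ℂ) v (by simpa) (by simpa)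
  rw [← Complex.ofReal_add, Complex.Gamma_ofReal, Complex.Gamma_ofReal, Complex.Gamma_ofReal,
    Complex.betaIntegral, intervalIntegral.integral_of_le zero_le_one] at hB
  rw [← integral_Ioc_eq_integral_Ioo]
  apply Complex.ofReal_injective
  push_cast
  rw [← hB, ← integral_complex_ofReal]
  refine setIntegral_congr_fun measurableSet_Ioc fun t ⟨ht0, ht1⟩ => ?_
  push_cast
  rw [Complex.ofReal_cpow ht0.le, Complex.ofReal_cpow (sub_nonneg.2 ht1)]
  push_cast
  rfl

lemma image_inv_one_add_sq_Ioi : (fun x : ℝ => (1 + x ^ 2)⁻¹) '' Ioi 0 = Ioo 0 1 := by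
  ext t
  constructor
  · rintro ⟨x, hx, rfl⟩
    have : 1 < 1 + x ^ 2 := by have := pow_pos (mem_Ioi.1 hx) 2; linarith
    exact ⟨by positivity, inv_lt_one_of_one_lt₀ this⟩
  · rintro ⟨ht0, ht1⟩
    have h1 : 1 < t⁻¹ := one_lt_inv_iff₀.2 ⟨ht0, ht1⟩
    refine ⟨√(t⁻¹ - 1), sqrt_pos.2 (by linarith), ?_⟩
    simp only
    rw [sq_sqrt (by linarith), add_sub_cancel, inv_inv]

lemma strictAntiOn_inv_one_add_sq : StrictAntiOn (fun x : ℝ => (1 + x ^ 2)⁻¹) (Ioi 0) :=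
  fun x hx y _ hxy => by
    have : x ^ 2 < y ^ 2 := pow_lt_pow_left₀ hxy (le_of_lt hx) two_ne_zero
    simp only
    gcongr

theorem integral_Ioi_one_add_sq_rpow_neg (s : ℝ) :
    ∫ x in Ioi (0 : ℝ), (1 + x ^ 2) ^ (-s) =
      1 / 2 * ∫ t in Ioo (0 : ℝ) 1, t ^ ((s - 1 / 2) - 1) * (1 - t) ^ ((1 / 2 : ℝ) - 1) := by
  have hderiv : ∀ x ∈ Ioi (0 : ℝ), HasDerivWithinAt (fun x : ℝ => (1 + x ^ 2)⁻¹)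
      (-(2 * x) / (1 + x ^ 2) ^ 2) (Ioi 0) x := fun x _ => by
    have h : HasDerivAt (fun x : ℝ => 1 + x ^ 2) (2 * x) x := by
      simpa using (hasDerivAt_pow 2 x).const_add 1
    exact (h.fun_inv (by positivity)).hasDerivWithinAt
  rw [← image_inv_one_add_sq_Ioi, integral_image_eq_integral_abs_deriv_smul measurableSet_Ioi
    hderiv strictAntiOn_inv_one_add_sq.injOn, ← integral_const_mul]
  refine (setIntegral_congr_fun measurableSet_Ioi fun x (hx : 0 < x) => ?_).symm
  set A := 1 + x ^ 2
  have hA0 : 0 < A := by positivity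
  have h1 : 1 - A⁻¹ = x ^ 2 * A⁻¹ := by field_simp; ring
  have h2 : (x ^ 2) ^ ((1 / 2 : ℝ) - 1) = x⁻¹ := by
    rw [← rpow_natCast, ← rpow_mul hx.le]; norm_num [rpow_neg_one]
  rw [smul_eq_mul, h1, mul_rpow (by positivity) (by positivity), h2, abs_div, abs_neg,
    abs_of_pos (by positivity : 0 < 2 * x), abs_of_pos (by positivity : 0 < A ^ 2),
    inv_rpow hA0.le, inv_rpow hA0.le, ← rpow_neg hA0.le, ← rpow_neg hA0.le]
  have h3 : A ^ (-(s - 1 / 2 - 1)) * A ^ (-(1 / 2 - 1 : ℝ)) = A ^ (-s) * A ^ 2 := by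
    rw [← rpow_add hA0, ← rpow_natCast, ← rpow_add hA0]
    ring_nf
  calc 1 / 2 * (2 * x / A ^ 2 * (A ^ (-(s - 1 / 2 - 1)) * (x⁻¹ * A ^ (-(1 / 2 - 1 : ℝ)))))
      = x * x⁻¹ * (A ^ (-(s - 1 / 2 - 1)) * A ^ (-(1 / 2 - 1 : ℝ))) / A ^ 2 := by ring
    _ = A ^ (-s) := by rw [h3, mul_inv_cancel₀ hx.ne']; field_simp

lemma integrable_one_add_sq_rpow_neg {s : ℝ} (hs : 1 / 2 < s) :
    Integrable fun x : ℝ => (1 + x ^ 2) ^ (-s) := by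
  have h := integrable_rpow_neg_one_add_norm_sq (E := ℝ) (μ := volume) (r := 2 * s)
    (by rw [Module.finrank_self]; push_cast; linarith)
  simpa [norm_eq_abs, sq_abs, neg_div, mul_div_assoc] using h

theorem integral_one_add_sq_rpow_neg {s : ℝ} (hs : 1 / 2 < s) :
    ∫ x : ℝ, (1 + x ^ 2) ^ (-s) = √π * Gamma (s - 1 / 2) / Gamma s := by
  calc ∫ x : ℝ, (1 + x ^ 2) ^ (-s) = 2 * ∫ x in Ioi (0 : ℝ), (1 + x ^ 2) ^ (-s) := by
        rw [← integral_comp_abs (f := fun x : ℝ => (1 + x ^ 2) ^ (-s))]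
        simp only [sq_abs]
    _ = ∫ t in Ioo (0 : ℝ) 1, t ^ ((s - 1 / 2) - 1) * (1 - t) ^ ((1 / 2 : ℝ) - 1) := by
        rw [integral_Ioi_one_add_sq_rpow_neg]; ring
    _ = Gamma (s - 1 / 2) * Gamma (1 / 2) / Gamma (s - 1 / 2 + 1 / 2) :=
        integral_Ioo_rpow_mul_one_sub_rpow (by linarith) one_half_pos
    _ = √π * Gamma (s - 1 / 2) / Gamma s := by rw [Gamma_one_half_eq, sub_add_cancel]; ring

theorem tendsto_integral_cos_mul_cocompact {f : ℝ → ℝ} (hf : Integrable f) :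
    Tendsto (fun a : ℝ => ∫ x, cos (a * x) * f x) (cocompact ℝ) (𝓝 0) := by
  have hscale : Tendsto (fun a : ℝ => a / (2 * π)) (cocompact ℝ) (cocompact ℝ) :=
    (Homeomorph.mulRight₀ (2 * π)⁻¹ (by positivity)).map_cocompact.le
  have hRL := (Complex.continuous_re.tendsto 0).comp
    ((Real.zero_at_infty_fourier fun x => (f x : ℂ)).comp hscale)
  refine hRL.congr fun a => ?_
  have hint := (Real.fourierIntegral_convergent_iff (a / (2 * π))).2 (hf.ofReal (𝕜 := ℂ))
  simp only [Function.comp_apply, fourier_real_eq]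
  rw [← RCLike.re_to_complex, ← integral_re (by simpa [mul_comm] using hint)]
  congr 1 with x
  have : 2 * π * -(x * (a / (2 * π))) = -(a * x) := by field_simp
  rw [RCLike.re_to_complex, Circle.smul_def, Real.fourierChar_apply, this, smul_eq_mul,
    Complex.re_mul_ofReal, Complex.exp_ofReal_mul_I_re, cos_neg]

theorem tendsto_integral_two_sub_two_cos_mul_cocompact {f : ℝ → ℝ} (hf : Integrable f) :
    Tendsto (fun a : ℝ => ∫ x, (2 - 2 * cos (a * x)) * f x) (cocompact ℝ)
      (𝓝 (2 * ∫ x, f x)) := by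
  have hcos (a : ℝ) : Integrable fun x => cos (a * x) * f x :=
    hf.bdd_mul (c := 1) (by fun_prop) (.of_forall fun x => by simpa using abs_cos_le_one (a * x))
  have hlim := (tendsto_integral_cos_mul_cocompact hf).const_mul 2 |>.const_sub (2 * ∫ x, f x)
  rw [mul_zero, sub_zero] at hlim
  refine hlim.congr fun a => ?_
  rw [← integral_const_mul, ← integral_const_mul,
    ← integral_sub (hf.const_mul 2) ((hcos a).const_mul 2)]
  congr 1 with x
  ring

end

/-- For every real `s > 1/2`, `∫_ℝ (2 − 2cos(aξ))·(1 + ξ²)^{−s} dξ → 2√π·Γ(s − 1/2)/Γ(s)`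
as `a → +∞`. -/
theorem stmt15 (s : ℝ) (hs : 1 / 2 < s) :
    Tendsto (fun a : ℝ => ∫ x : ℝ, (2 - 2 * Real.cos (a * x)) * (1 + x ^ 2) ^ (-s))
      atTop (nhds (2 * Real.sqrt Real.pi * Real.Gamma (s - 1 / 2) / Real.Gamma s)) := by
  have hlim := (tendsto_integral_two_sub_two_cos_mul_cocompact
    (integrable_one_add_sq_rpow_neg hs)).mono_left atTop_le_cocompact
  rwa [integral_one_add_sq_rpow_neg hs, ← mul_div_assoc, ← mul_assoc] at hlim
end
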